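/- arXiv:2510.06941 — 3 statements merged into one kernel-verified Lean document; each statement's English description precedes it below -/
import Mathlib

section
/- For every positive integer m, ∑_{p=1}^{m} (-1)^{p-1} · (p-1)! · p · S(m,p) = (-1)^{m-1}. -/
/-- Stirling numbers of the second kind. -/
def stirling : ℕ → ℕ → ℕ
  | 0, 0 => 1
  | 0, _ + 1 => 0
  | _ + 1, 0 => 0
  | n + 1, k + 1 => (k + 1) * stirling n (k + 1) + stirling n k

lemma stirling_eq_zero_of_lt : ∀ n k : ℕ, n < k → stirling n k = 0 := by
  intro n
  induction n with
  | zero =>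
    intro k hk
    obtain ⟨j, rfl⟩ := Nat.exists_eq_add_of_lt hk
    rfl
  | succ n ih =>
    intro k hk
    obtain ⟨j, rfl⟩ : ∃ j, k = j + 1 := ⟨k - 1, by omega⟩
    have h1 : stirling n (j + 1) = 0 := ih _ (by omega)
    have h2 : stirling n j = 0 := ih _ (by omega)
    show (j + 1) * stirling n (j + 1) + stirling n j = 0
    rw [h1, h2]; ring

lemma g_eq (m : ℕ) :
    ∑ p ∈ Finset.range (m + 1),
      (-1 : ℤ) ^ p * (Nat.factorial p : ℤ) * (stirling m p : ℤ) = (-1 : ℤ) ^ m := by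
  induction m with
  | zero => simp [stirling]
  | succ n ih =>
    rw [Finset.sum_range_succ']
    have h0 : stirling (n + 1) 0 = 0 := rfl
    rw [h0]
    have hstep : ∀ k ∈ Finset.range (n + 1),
        (-1 : ℤ) ^ (k + 1) * (Nat.factorial (k + 1) : ℤ) * (stirling (n + 1) (k + 1) : ℤ)
        = ((-1 : ℤ) ^ (k + 1) * (Nat.factorial (k + 1) : ℤ) * ((k + 1 : ℕ) : ℤ)
            * (stirling n (k + 1) : ℤ))
          + ((-1 : ℤ) ^ (k + 1) * (Nat.factorial (k + 1) : ℤ) * (stirling n k : ℤ)) := by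
      intro k _
      have : stirling (n + 1) (k + 1) = (k + 1) * stirling n (k + 1) + stirling n k := rfl
      rw [this]
      push_cast
      ring
    rw [Finset.sum_congr rfl hstep, Finset.sum_add_distrib]
    -- shift the first sum
    have hshift :
        ∑ k ∈ Finset.range (n + 1),
          (-1 : ℤ) ^ (k + 1) * (Nat.factorial (k + 1) : ℤ) * ((k + 1 : ℕ) : ℤ)
            * (stirling n (k + 1) : ℤ)
        = ∑ j ∈ Finset.range (n + 1),
          (-1 : ℤ) ^ j * (Nat.factorial j : ℤ) * ((j : ℕ) : ℤ) * (stirling n j : ℤ) := by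
      have key := Finset.sum_range_succ'
        (fun j => (-1 : ℤ) ^ j * (Nat.factorial j : ℤ) * ((j : ℕ) : ℤ) * (stirling n j : ℤ))
        (n + 1)
      have key2 := Finset.sum_range_succ
        (fun j => (-1 : ℤ) ^ j * (Nat.factorial j : ℤ) * ((j : ℕ) : ℤ) * (stirling n j : ℤ))
        (n + 1)
      have hz : stirling n (n + 1) = 0 := stirling_eq_zero_of_lt n (n + 1) (by omega)
      simp only [hz] at key2
      simp only [Nat.cast_zero] at key
      rw [key2] at key
      simpa using key.symm
    rw [hshift, ← Finset.sum_add_distrib]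
    have hcomb : ∀ j ∈ Finset.range (n + 1),
        (-1 : ℤ) ^ j * (Nat.factorial j : ℤ) * ((j : ℕ) : ℤ) * (stirling n j : ℤ)
          + (-1 : ℤ) ^ (j + 1) * (Nat.factorial (j + 1) : ℤ) * (stirling n j : ℤ)
        = -((-1 : ℤ) ^ j * (Nat.factorial j : ℤ) * (stirling n j : ℤ)) := by
      intro j _
      rw [Nat.factorial_succ]
      push_cast
      ring
    rw [Finset.sum_congr rfl hcomb, Finset.sum_neg_distrib, ih]
    push_cast
    ring

/-- For every positive integer `m`,
`∑_{p=1}^{m} (-1)^{p-1} · (p-1)! · p · S(m,p) = (-1)^{m-1}`. -/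
theorem D_m_zero_zero (m : ℕ) (hm : 1 ≤ m) :
    ∑ p ∈ Finset.Icc 1 m,
      (-1 : ℤ) ^ (p - 1) * (Nat.factorial (p - 1) : ℤ) * (p : ℤ) * (stirling m p : ℤ)
      = (-1 : ℤ) ^ (m - 1) := by
  obtain ⟨n, rfl⟩ : ∃ n, m = n + 1 := ⟨m - 1, by omega⟩
  have hIcc : ∑ p ∈ Finset.Icc 1 (n + 1),
      (-1 : ℤ) ^ (p - 1) * (Nat.factorial (p - 1) : ℤ) * (p : ℤ) * (stirling (n + 1) p : ℤ)
      = ∑ k ∈ Finset.range (n + 1),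
      (-1 : ℤ) ^ k * (Nat.factorial k : ℤ) * ((k + 1 : ℕ) : ℤ) * (stirling (n + 1) (k + 1) : ℤ) := by
    rw [← Finset.Ico_add_one_right_eq_Icc, Finset.sum_Ico_eq_sum_range]
    simp [add_comm]
  rw [hIcc]
  have hneg : ∀ k ∈ Finset.range (n + 1),
      (-1 : ℤ) ^ k * (Nat.factorial k : ℤ) * ((k + 1 : ℕ) : ℤ) * (stirling (n + 1) (k + 1) : ℤ)
      = -((-1 : ℤ) ^ (k + 1) * (Nat.factorial (k + 1) : ℤ) * (stirling (n + 1) (k + 1) : ℤ)) := by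
    intro k _
    rw [Nat.factorial_succ]
    push_cast
    ring
  rw [Finset.sum_congr rfl hneg, Finset.sum_neg_distrib]
  have := g_eq (n + 1)
  rw [Finset.sum_range_succ'] at this
  have h0 : stirling (n + 1) 0 = 0 := rfl
  rw [h0] at this
  simp only [Nat.cast_zero, mul_zero, add_zero] at this
  rw [this]
  simp [pow_succ]
end

section
/- Let V be a module over a field of characteristic zero, let N be a positive integer, and let ν_n : V^n → V (for 1 ≤ n ≤ N) be a family of symmetric multilinear maps, with ν_n = 0 for n > N. For a ∈ V define the twisted operations ν^a_n(x₁,…,x_n) = ∑_{k≥0} (1/k!) ν_{n+k}(a,…,a,x₁,…,x_n) (a finite sum). Then for all a, b ∈ V and all n, (ν^a)^b_n = ν^{a+b}_n. -/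
/-- The twisted operation `ν^a_n(x₁,…,x_n) = ∑_{k≥0} (1/k!) ν_{n+k}(a,…,a,x₁,…,x_n)`.
Since `ν_n = 0` for `n > N`, the sum over `k ∈ {0,…,N}` captures all nonzero terms. -/
noncomputable def twistFun (K : Type*) [Field K] (V : Type*) [AddCommGroup V] [Module K V]
    (N : ℕ) (ν : (n : ℕ) → MultilinearMap K (fun _ : Fin n => V) V)
    (a : V) (n : ℕ) (x : Fin n → V) : V :=
  ∑ k ∈ Finset.range (N + 1),
    ((Nat.factorial k : K)⁻¹) • ν (k + n) (Fin.append (fun _ : Fin k => a) x)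

/-! Expanding `ν_{m+n}((a+b)^m, x)` by multilinearity gives a sum over the subsets of the `m`
slots that receive `a`, and symmetry sorts each term to `ν(a^k, b^(m-k), x)`; hence it equals
`∑ C(m,k) ν(a^k, b^(m-k), x)`. As `C(m,k)/m! = 1/(k! (m-k)!)`, the right-hand side is the sum of
`ν(a^k, b^j, x)/(k! j!)` over the triangle `k + j ≤ N`, while the left-hand side is the same sum
over the square `k, j ≤ N`; the extra terms vanish because `ν_{k+j+n} = 0` once `k + j > N`. -/

open Finset Nat

section PermInvariant

variable {α β : Type*} (f : (n : ℕ) → (Fin n → α) → β)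
  (hf : ∀ (n : ℕ) (σ : Equiv.Perm (Fin n)) (x : Fin n → α), f n (x ∘ σ) = f n x)
include hf

theorem apply_comp_equiv_of_perm_invariant {p q : ℕ} (e : Fin p ≃ Fin q) (y : Fin q → α) :
    f p (y ∘ e) = f q y := by
  obtain rfl := Fin.equiv_iff_eq.mp ⟨e⟩
  exact hf p e y

theorem apply_append_assoc_of_perm_invariant {k j n : ℕ} (u : Fin k → α) (v : Fin j → α)
    (x : Fin n → α) :
    f (k + (j + n)) (Fin.append u (Fin.append v x)) =
      f (k + j + n) (Fin.append (Fin.append u v) x) := by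
  rw [Fin.append_assoc]
  exact (apply_comp_equiv_of_perm_invariant f hf (finCongr (Nat.add_assoc k j n)) _).symm

theorem apply_append_piecewise_of_perm_invariant {m n : ℕ} (s : Finset (Fin m)) (a b : α)
    (x : Fin n → α) :
    f (m + n) (Fin.append (s.piecewise (fun _ => a) fun _ => b) x) =
      f (#s + (m - #s) + n)
        (Fin.append (Fin.append (fun _ : Fin #s => a) fun _ : Fin (m - #s) => b) x) := by
  have hsc : #sᶜ = m - #s := by rw [card_compl, Fintype.card_fin]
  let e : Fin (#s + (m - #s)) ≃ Fin m :=
    finSumFinEquiv.symm.trans (finSumEquivOfFinset rfl hsc)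
  rw [← apply_comp_equiv_of_perm_invariant f hf
    (finSumFinEquiv.symm.trans ((e.sumCongr (Equiv.refl _)).trans finSumFinEquiv))]
  congr 1
  funext i
  induction i using Fin.addCases with
  | left i =>
    induction i using Fin.addCases with
    | left i => simp [e]
    | right i =>
      simp [e, piecewise_eq_of_notMem _ _ _ (mem_compl.1 (orderEmbOfFin_mem sᶜ hsc i))]
  | right i => simp

end PermInvariant

theorem Fin.sumElim_finSumFinEquiv_symm {α : Type*} {m n : ℕ} (u : Fin m → α) (v : Fin n → α) :
    (fun i => Sum.elim u v (finSumFinEquiv.symm i)) = Fin.append u v := by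
  funext i
  induction i using Fin.addCases <;> simp

section Binomial

variable {R M N : Type*} [CommSemiring R] [AddCommMonoid M] [Module R M] [AddCommMonoid N]
  [Module R N]

theorem apply_append_const_add_eq_sum_choose
    (ν : (n : ℕ) → MultilinearMap R (fun _ : Fin n => M) N)
    (hν : ∀ (n : ℕ) (σ : Equiv.Perm (Fin n)) (x : Fin n → M), ν n (x ∘ σ) = ν n x)
    (m : ℕ) (a b : M) {n : ℕ} (x : Fin n → M) :
    ν (m + n) (Fin.append (fun _ => a + b) x) =
      ∑ k ∈ range (m + 1), m.choose k •
        ν (k + (m - k) + n)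
          (Fin.append (Fin.append (fun _ : Fin k => a) fun _ : Fin (m - k) => b) x) := by
  classical
  -- `ν (m + n)` with its last `n` arguments frozen at `x` is multilinear in the first `m`.
  have h := congrArg (· x)
    (((ν (m + n)).domDomCongr finSumFinEquiv.symm).currySum.map_add_univ (fun _ => a) (fun _ => b))
  simp only [_root_.sum_apply, MultilinearMap.currySum_apply',
    MultilinearMap.domDomCongr_apply, Fin.sumElim_finSumFinEquiv_symm] at h
  refine h.trans ?_
  rw [← powerset_univ]
  simp_rw [apply_append_piecewise_of_perm_invariant (fun n y => ν n y) hν]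
  rw [sum_powerset_apply_card (fun k => ν (k + (m - k) + n)
    (Fin.append (Fin.append (fun _ : Fin k => a) fun _ : Fin (m - k) => b) x)), Finset.card_fin]

end Binomial

theorem Finset.sum_range_sum_range_eq_sum_range_diag {M : Type*} [AddCommMonoid M]
    (N : ℕ) (F : ℕ → ℕ → M) (hF : ∀ k j, N < k + j → F k j = 0) :
    ∑ k ∈ range (N + 1), ∑ j ∈ range (N + 1), F k j =
      ∑ m ∈ range (N + 1), ∑ k ∈ range (m + 1), F k (m - k) := by
  rw [sum_range_diag_flip]
  refine sum_congr rfl fun k _ => (sum_subset (range_subset_range.2 (by omega)) ?_).symm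
  intro j hj hj'
  simp only [mem_range] at hj hj'
  exact hF k j (by omega)

theorem Nat.inv_factorial_mul_cast_choose (K : Type*) [Semifield K] [CharZero K] {k m : ℕ}
    (h : k ≤ m) : (m ! : K)⁻¹ * m.choose k = (k ! : K)⁻¹ * ((m - k)! : K)⁻¹ := by
  rw [cast_choose K h, div_eq_mul_inv, ← mul_assoc,
    inv_mul_cancel₀ (cast_ne_zero.2 m.factorial_ne_zero), one_mul, mul_inv]

theorem twist_twist_eq_twist_add_general (K : Type*) [Field K] [CharZero K]
    (V : Type*) [AddCommGroup V] [Module K V]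
    (N : ℕ)
    (ν : (n : ℕ) → MultilinearMap K (fun _ : Fin n => V) V)
    (hsym : ∀ (n : ℕ) (σ : Equiv.Perm (Fin n)) (x : Fin n → V), ν n (x ∘ σ) = ν n x)
    (hvan : ∀ n : ℕ, N < n → ν n = 0)
    (a b : V) (n : ℕ) (x : Fin n → V) :
    (∑ j ∈ Finset.range (N + 1),
        ((Nat.factorial j : K)⁻¹) •
          twistFun K V N ν a (j + n) (Fin.append (fun _ : Fin j => b) x))
      = twistFun K V N ν (a + b) n x := by
  set G : ℕ → ℕ → V := fun k j =>
    ν (k + j + n) (Fin.append (Fin.append (fun _ : Fin k => a) fun _ : Fin j => b) x)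
  calc _ = ∑ k ∈ range (N + 1), ∑ j ∈ range (N + 1), ((k ! : K)⁻¹ * (j ! : K)⁻¹) • G k j := by
        simp_rw [twistFun, smul_sum, smul_smul,
          apply_append_assoc_of_perm_invariant (fun n y => ν n y) hsym]
        exact sum_comm.trans (sum_congr rfl fun k _ => sum_congr rfl fun j _ => by rw [mul_comm])
    _ = ∑ m ∈ range (N + 1), ∑ k ∈ range (m + 1),
          ((k ! : K)⁻¹ * ((m - k)! : K)⁻¹) • G k (m - k) :=
        sum_range_sum_range_eq_sum_range_diag N _ fun k j h => by
          simp [G, hvan (k + j + n) (by omega)]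
    _ = ∑ m ∈ range (N + 1), (m ! : K)⁻¹ • ∑ k ∈ range (m + 1), m.choose k • G k (m - k) := by
        refine sum_congr rfl fun m _ => ?_
        simp_rw [smul_sum, ← cast_smul_eq_nsmul K, smul_smul]
        refine sum_congr rfl fun k hk => ?_
        rw [inv_factorial_mul_cast_choose K (mem_range_succ_iff.1 hk)]
    _ = twistFun K V N ν (a + b) n x := by
        simp_rw [twistFun, apply_append_const_add_eq_sum_choose ν hsym]
        rfl

/-- Twisting by `a` and then by `b` agrees with twisting by `a + b`:
`(ν^a)^b_n = ν^{a+b}_n`. -/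
theorem twist_twist_eq_twist_add (K : Type*) [Field K] [CharZero K]
    (V : Type*) [AddCommGroup V] [Module K V]
    (N : ℕ) (hN : 0 < N)
    (ν : (n : ℕ) → MultilinearMap K (fun _ : Fin n => V) V)
    (hsym : ∀ (n : ℕ) (σ : Equiv.Perm (Fin n)) (x : Fin n → V), ν n (x ∘ σ) = ν n x)
    (hvan : ∀ n : ℕ, N < n → ν n = 0)
    (a b : V) (n : ℕ) (x : Fin n → V) :
    (∑ j ∈ Finset.range (N + 1),
        ((Nat.factorial j : K)⁻¹) •
          twistFun K V N ν a (j + n) (Fin.append (fun _ : Fin j => b) x))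
      = twistFun K V N ν (a + b) n x :=
  twist_twist_eq_twist_add_general K V N ν hsym hvan a b n x
end

section
/- Let V be a module over a field of characteristic zero and let ν_n : V^n → V (1 ≤ n ≤ N, ν_n symmetric multilinear, ν_n = 0 for n > N). Define MC(x) = ∑_{n≥1} (1/n!) ν_n(x,…,x) and the twisted operations ν^a_n = ∑_{k≥0} (1/k!) ν_{n+k}(a^{⊗k}, −). Then for all a, b ∈ V: MC_ν(a + b) = MC_ν(a) + MC_{ν^a}(b), where MC_{ν^a}(b) = ∑_{n≥1} (1/n!) ν^a_n(b,…,b). In particular, if a is a Maurer–Cartan element of ν, then b is a Maurer–Cartan element of the twisted structure ν^a if and only if a + b is a Maurer–Cartan element of ν. -/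
/-- The Maurer–Cartan map `MC(x) = ∑_{n≥1} (1/n!) ν_n(x,…,x)`. -/
noncomputable def MCmap (K : Type*) [Field K] (V : Type*) [AddCommGroup V] [Module K V]
    (N : ℕ) (ν : (n : ℕ) → MultilinearMap K (fun _ : Fin n => V) V) (x : V) : V :=
  ∑ n ∈ Finset.Icc 1 N, ((Nat.factorial n : K)⁻¹) • ν n (fun _ => x)

/-!
Write `c(k, m) = ν_{k+m}(a,…,a,b,…,b) / (k! m!)` with `k` copies of `a` and `m` of `b`.
By multilinearity and symmetry, `ν_n(a+b,…,a+b) / n!` expands binomially into the sum of the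
`c(k, m)` with `k + m = n`, while `ν^a_m(b,…,b) / m!` is the sum of the `c(k, m)` over `k`.
As `c(k, m) = 0` for `k + m > N`, summing over all `n ≤ N`, resp. all `m ≤ N`, gives the same
total. Including the constant terms, these sums are `ν_0 + MC_ν(a + b)` and
`ν^a_0 + MC_{ν^a}(b)`, and `ν^a_0 = ν_0 + MC_ν(a)`.
-/

open Finset

theorem Finset.sum_range_succ_eq_add_sum_Icc {M : Type*} [AddCommMonoid M] (N : ℕ) (f : ℕ → M) :
    ∑ n ∈ range (N + 1), f n = f 0 + ∑ n ∈ Icc 1 N, f n := by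
  rw [show range (N + 1) = insert 0 (Icc 1 N) by ext; simp; omega, sum_insert (by simp)]

theorem Finset.sum_range_sum_antidiagonal_eq_sum_range_sum_range {M : Type*} [AddCommMonoid M]
    (N : ℕ) (f : ℕ × ℕ → M) (hf : ∀ p : ℕ × ℕ, N < p.1 + p.2 → f p = 0) :
    ∑ n ∈ range (N + 1), ∑ p ∈ antidiagonal n, f p
      = ∑ m ∈ range (N + 1), ∑ k ∈ range (N + 1), f (k, m) := by
  set S := (range (N + 1) ×ˢ range (N + 1)).filter fun p => p.1 + p.2 ≤ N
  have hfiber : ∀ n ∈ range (N + 1), antidiagonal n = S.filter fun p => p.1 + p.2 = n := by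
    intro n hn
    ext p
    simp only [mem_range] at hn
    simp only [S, HasAntidiagonal.mem_antidiagonal, mem_filter, mem_product, mem_range]
    omega
  calc ∑ n ∈ range (N + 1), ∑ p ∈ antidiagonal n, f p
      = ∑ n ∈ range (N + 1), ∑ p ∈ S with p.1 + p.2 = n, f p :=
        sum_congr rfl fun n hn => by rw [hfiber n hn]
    _ = ∑ p ∈ S, f p :=
        sum_fiberwise_of_maps_to (fun p hp => by simp only [S, mem_filter] at hp; simp; omega) f
    _ = ∑ p ∈ range (N + 1) ×ˢ range (N + 1), f p :=
        sum_subset (filter_subset _ _) fun p hp hpS => hf p (by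
          simp only [S, mem_filter, not_and, not_le] at hpS; exact hpS hp)
    _ = ∑ m ∈ range (N + 1), ∑ k ∈ range (N + 1), f (k, m) := sum_product_right _ _ _

theorem Fin.append_const {α : Type*} (a b : α) (k m : ℕ) :
    Fin.append (fun _ : Fin k => a) (fun _ : Fin m => b)
      = fun i : Fin (k + m) => if (i : ℕ) < k then a else b := by
  funext i
  refine Fin.addCases (fun j => ?_) (fun j => ?_) i <;> simp

theorem apply_ite_mem_eq_of_card_eq {ι α β : Type*} [Fintype ι] [DecidableEq ι]
    (f : (ι → α) → β) (hf : ∀ (σ : Equiv.Perm ι) (x : ι → α), f (x ∘ σ) = f x) (a b : α)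
    {s t : Finset ι} (h : #s = #t) :
    f (fun i => if i ∈ s then a else b) = f (fun i => if i ∈ t then a else b) := by
  let σ : Equiv.Perm ι := (equivOfCardEq h.symm).extendSubtype
  have hσ : (fun i => if i ∈ s then a else b) ∘ σ = fun i => if i ∈ t then a else b := by
    funext i
    by_cases hi : i ∈ t
    · simp [hi, σ, Equiv.extendSubtype_mem _ i hi]
    · simp [hi, σ, Equiv.extendSubtype_not_mem _ i hi]
  rw [← hσ, hf]

theorem MultilinearMap.map_const_add_of_perm_invariant {R M M' : Type*} [CommSemiring R]
    [AddCommMonoid M] [AddCommMonoid M'] [Module R M] [Module R M'] {n : ℕ}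
    (f : MultilinearMap R (fun _ : Fin n => M) M')
    (hf : ∀ (σ : Equiv.Perm (Fin n)) (x : Fin n → M), f (x ∘ σ) = f x) (a b : M) :
    f (fun _ => a + b)
      = ∑ p ∈ antidiagonal n, n.choose p.1 • f (fun i => if (i : ℕ) < p.1 then a else b) := by
  classical
  set g : ℕ → M' := fun k => f (fun i => if (i : ℕ) < k then a else b)
  have hpiecewise : ∀ s : Finset (Fin n), f (s.piecewise (fun _ => a) (fun _ => b)) = g #s := by
    intro s
    have hcard : #s = #{i : Fin n | (i : ℕ) < #s} := by
      rw [Fin.card_filter_val_lt, min_eq_right (card_le_univ s |>.trans_eq (by simp))]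
    convert apply_ite_mem_eq_of_card_eq f hf a b hcard using 3
    · rfl
    · simp
  calc f (fun _ => a + b)
      = ∑ s ∈ (univ : Finset (Fin n)).powerset, g #s := by
        rw [show (fun _ => a + b) = (fun _ : Fin n => a) + fun _ => b from rfl, f.map_add_univ,
          powerset_univ]
        exact sum_congr rfl fun s _ => hpiecewise s
    _ = ∑ k ∈ Finset.range (n + 1), n.choose k • g k := by
        rw [sum_powerset_apply_card, card_univ, Fintype.card_fin]
    _ = ∑ p ∈ antidiagonal n, n.choose p.1 • g p.1 :=
        (Nat.sum_antidiagonal_eq_sum_range_succ (fun k _ => n.choose k • g k) n).symm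

section Twisting

variable {K V : Type*} [Field K] [AddCommGroup V] [Module K V]
  (ν : (n : ℕ) → MultilinearMap K (fun _ : Fin n => V) V) (a b : V)

noncomputable def mixedTerm (p : ℕ × ℕ) : V :=
  ((p.1.factorial : K)⁻¹ * (p.2.factorial : K)⁻¹) •
    ν (p.1 + p.2) (Fin.append (fun _ : Fin p.1 => a) (fun _ : Fin p.2 => b))

theorem mixedTerm_eq_zero {N : ℕ} (hvan : ∀ n : ℕ, N < n → ν n = 0) {p : ℕ × ℕ}
    (hp : N < p.1 + p.2) : mixedTerm ν a b p = 0 := by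
  simp [mixedTerm, hvan _ hp]

theorem inv_factorial_smul_map_const_add [CharZero K]
    (hsym : ∀ (n : ℕ) (σ : Equiv.Perm (Fin n)) (x : Fin n → V), ν n (x ∘ σ) = ν n x) (n : ℕ) :
    (n.factorial : K)⁻¹ • ν n (fun _ => a + b) = ∑ p ∈ antidiagonal n, mixedTerm ν a b p := by
  rw [(ν n).map_const_add_of_perm_invariant (hsym n), smul_sum]
  refine sum_congr rfl fun ⟨k, m⟩ hp => ?_
  obtain rfl : k + m = n := HasAntidiagonal.mem_antidiagonal.mp hp
  have hcoeff : ((k + m).factorial : K)⁻¹ * (k + m).choose k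
      = (k.factorial : K)⁻¹ * (m.factorial : K)⁻¹ := by
    have : ((k + m).factorial : K) ≠ 0 := Nat.cast_ne_zero.mpr (Nat.factorial_ne_zero _)
    rw [Nat.cast_choose K (Nat.le_add_right k m), Nat.add_sub_cancel_left]
    field_simp
  rw [mixedTerm, Fin.append_const, ← hcoeff, ← Nat.cast_smul_eq_nsmul K, smul_smul]

theorem inv_factorial_smul_twistFun (N m : ℕ) :
    (m.factorial : K)⁻¹ • twistFun K V N ν a m (fun _ => b)
      = ∑ k ∈ range (N + 1), mixedTerm ν a b (k, m) := by
  rw [twistFun, smul_sum]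
  refine sum_congr rfl fun k _ => ?_
  rw [mixedTerm, smul_smul, mul_comm]

theorem twistFun_zero (N : ℕ) :
    twistFun K V N ν a 0 (fun _ => b)
      = ∑ n ∈ range (N + 1), (n.factorial : K)⁻¹ • ν n (fun _ => a) := by
  simpa [mixedTerm, Fin.append_const] using inv_factorial_smul_twistFun ν a b N 0

theorem sum_inv_factorial_smul_map_const_add_eq_sum_twistFun [CharZero K]
    (hsym : ∀ (n : ℕ) (σ : Equiv.Perm (Fin n)) (x : Fin n → V), ν n (x ∘ σ) = ν n x)
    {N : ℕ} (hvan : ∀ n : ℕ, N < n → ν n = 0) :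
    ∑ n ∈ range (N + 1), (n.factorial : K)⁻¹ • ν n (fun _ => a + b)
      = ∑ m ∈ range (N + 1), (m.factorial : K)⁻¹ • twistFun K V N ν a m (fun _ => b) := by
  simp only [inv_factorial_smul_map_const_add ν a b hsym, inv_factorial_smul_twistFun]
  exact sum_range_sum_antidiagonal_eq_sum_range_sum_range N _
    fun _ hp => mixedTerm_eq_zero ν a b hvan hp

theorem sum_inv_factorial_smul_map_const_eq_add_MCmap (N : ℕ) (x : V) :
    ∑ n ∈ range (N + 1), (n.factorial : K)⁻¹ • ν n (fun _ => x) = ν 0 ![] + MCmap K V N ν x := by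
  rw [sum_range_succ_eq_add_sum_Icc, MCmap, Nat.factorial_zero, Nat.cast_one, inv_one, one_smul,
    Subsingleton.elim (fun _ : Fin 0 => x) ![]]

end Twisting

theorem MC_twist_general (K : Type*) [Field K] [CharZero K]
    (V : Type*) [AddCommGroup V] [Module K V]
    (N : ℕ)
    (ν : (n : ℕ) → MultilinearMap K (fun _ : Fin n => V) V)
    (hsym : ∀ (n : ℕ) (σ : Equiv.Perm (Fin n)) (x : Fin n → V), ν n (x ∘ σ) = ν n x)
    (hvan : ∀ n : ℕ, N < n → ν n = 0)
    (a b : V) :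
    MCmap K V N ν (a + b)
        = MCmap K V N ν a
          + ∑ n ∈ Finset.Icc 1 N,
              ((Nat.factorial n : K)⁻¹) • twistFun K V N ν a n (fun _ => b) ∧
    (MCmap K V N ν a = 0 →
      ((∑ n ∈ Finset.Icc 1 N,
          ((Nat.factorial n : K)⁻¹) • twistFun K V N ν a n (fun _ => b)) = 0
        ↔ MCmap K V N ν (a + b) = 0)) := by
  have hsplit := sum_inv_factorial_smul_map_const_eq_add_MCmap (K := K) ν N
  have hMC : MCmap K V N ν (a + b) = MCmap K V N ν a
      + ∑ n ∈ Finset.Icc 1 N, ((Nat.factorial n : K)⁻¹) • twistFun K V N ν a n (fun _ => b) := by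
    have key := sum_inv_factorial_smul_map_const_add_eq_sum_twistFun ν a b hsym hvan
    rw [hsplit, sum_range_succ_eq_add_sum_Icc, Nat.factorial_zero, Nat.cast_one, inv_one,
      one_smul, twistFun_zero, hsplit, add_assoc] at key
    exact add_left_cancel key
  exact ⟨hMC, fun ha => by rw [hMC, ha, zero_add]⟩

/-- `MC_ν(a + b) = MC_ν(a) + MC_{ν^a}(b)`; in particular, if `a` is a
Maurer–Cartan element of `ν`, then `b` is a Maurer–Cartan element of the twisted
structure `ν^a` iff `a + b` is a Maurer–Cartan element of `ν`. -/
theorem MC_twist (K : Type*) [Field K] [CharZero K]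
    (V : Type*) [AddCommGroup V] [Module K V]
    (N : ℕ) (hN : 0 < N)
    (ν : (n : ℕ) → MultilinearMap K (fun _ : Fin n => V) V)
    (hsym : ∀ (n : ℕ) (σ : Equiv.Perm (Fin n)) (x : Fin n → V), ν n (x ∘ σ) = ν n x)
    (hvan : ∀ n : ℕ, N < n → ν n = 0)
    (a b : V) :
    MCmap K V N ν (a + b)
        = MCmap K V N ν a
          + ∑ n ∈ Finset.Icc 1 N,
              ((Nat.factorial n : K)⁻¹) • twistFun K V N ν a n (fun _ => b) ∧
    (MCmap K V N ν a = 0 →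
      ((∑ n ∈ Finset.Icc 1 N,
          ((Nat.factorial n : K)⁻¹) • twistFun K V N ν a n (fun _ => b)) = 0
        ↔ MCmap K V N ν (a + b) = 0)) :=
  MC_twist_general K V N ν hsym hvan a b
end
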